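/- arXiv:1203.3887 — 2 statements merged into one kernel-verified Lean document; each statement's English description precedes it below -/
import Mathlib

section
/- Consider the two-node Ising model on {−1,1}² with edge potential θ and node potentials φ₁, φ₂, i.e., P(x₁,x₂) = exp(θx₁x₂ + φ₁x₁ + φ₂x₂)/Z with Z the normalizing constant. Then the determinant of its 2×2 joint p.m.f. matrix M(x₁,x₂) = P(x₁,x₂) equals det M = sinh(2θ) / ( 2·( e^{θ}cosh(φ₁+φ₂) + e^{−θ}cosh(φ₁−φ₂) )² ). Consequently |det M| ≤ tanh(|θ|)/4, with equality when φ₁ = φ₂ = 0; in particular, for zero node potentials, e^{−d(1,2)} = |det M| = tanh(|θ|)/4, where d(1,2) = −log|det M| is the information distance. -/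
open scoped BigOperators

/-- The sign value associated with an index of `Fin 2`: index `0` corresponds to spin `+1`
and index `1` to spin `-1`. -/
def spinVal (i : Fin 2) : ℝ := if i = 0 then 1 else -1

/-- The joint p.m.f. matrix of the two-node Ising model on `{−1,1}²` with edge potential `θ`
and node potentials `φ₁, φ₂`:  `M(x₁,x₂) = exp(θx₁x₂ + φ₁x₁ + φ₂x₂)/Z`. -/
noncomputable def twoNodeIsingMatrix (θ φ₁ φ₂ : ℝ) : Matrix (Fin 2) (Fin 2) ℝ :=
  Matrix.of fun i j =>
    Real.exp (θ * spinVal i * spinVal j + φ₁ * spinVal i + φ₂ * spinVal j) /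
      (∑ i' : Fin 2, ∑ j' : Fin 2,
        Real.exp (θ * spinVal i' * spinVal j' + φ₁ * spinVal i' + φ₂ * spinVal j'))

/-- Closed form for the determinant. -/
lemma twoNodeIsing_det_formula (θ φ₁ φ₂ : ℝ) :
    (twoNodeIsingMatrix θ φ₁ φ₂).det =
      Real.sinh (2 * θ) /
        (2 * (Real.exp θ * Real.cosh (φ₁ + φ₂) + Real.exp (-θ) * Real.cosh (φ₁ - φ₂)) ^ 2) := by
  rw [Matrix.det_fin_two]
  simp only [twoNodeIsingMatrix, Matrix.of_apply, spinVal, Fin.sum_univ_two,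
    if_pos rfl, Fin.isValue, mul_one, mul_neg_one, one_mul]
  norm_num
  rw [Real.sinh_eq, Real.cosh_eq, Real.cosh_eq]
  simp only [Real.exp_add, Real.exp_neg, Real.exp_sub, neg_add, two_mul, sub_eq_add_neg, neg_neg]
  have ha := Real.exp_ne_zero θ
  have hb := Real.exp_ne_zero φ₁
  have hc := Real.exp_ne_zero φ₂
  field_simp
  ring

lemma twoNodeIsing_abs_sinh (x : ℝ) : |Real.sinh x| = Real.sinh |x| := by
  rcases le_or_gt 0 x with h | h
  · rw [abs_of_nonneg h, abs_of_nonneg (Real.sinh_nonneg_iff.2 h)]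
  · rw [abs_of_neg h, abs_of_neg (Real.sinh_neg_iff.2 h), ← Real.sinh_neg]

lemma twoNodeIsing_abs_tanh (x : ℝ) : |Real.tanh x| = Real.tanh |x| := by
  rw [Real.tanh_eq_sinh_div_cosh, Real.tanh_eq_sinh_div_cosh, abs_div, twoNodeIsing_abs_sinh,
    abs_of_pos (Real.cosh_pos x), Real.cosh_abs]

lemma twoNodeIsing_det_zero (θ : ℝ) :
    |(twoNodeIsingMatrix θ 0 0).det| = Real.tanh |θ| / 4 := by
  have hc := Real.cosh_pos θ
  have hdet : (twoNodeIsingMatrix θ 0 0).det = Real.tanh θ / 4 := by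
    rw [twoNodeIsing_det_formula]
    rw [Real.sinh_two_mul, Real.tanh_eq_sinh_div_cosh]
    simp only [add_zero, sub_zero, zero_add, zero_sub, Real.cosh_zero, mul_one]
    rw [Real.cosh_eq]
    field_simp
    ring
  rw [hdet, abs_div, abs_of_pos (by norm_num : (0:ℝ) < 4), twoNodeIsing_abs_tanh]

/-- **Determinant of the two-node Ising joint p.m.f. matrix.**
`det M = sinh(2θ) / (2 (e^θ cosh(φ₁+φ₂) + e^{−θ} cosh(φ₁−φ₂))²)`; consequently
`|det M| ≤ tanh|θ|/4`, with equality when `φ₁ = φ₂ = 0`; in particular for zero node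
potentials the information distance `d(1,2) = −log|det M|` satisfies
`e^{−d(1,2)} = |det M| = tanh|θ|/4`. -/
theorem twoNodeIsing_det (θ φ₁ φ₂ : ℝ) :
    (twoNodeIsingMatrix θ φ₁ φ₂).det =
      Real.sinh (2 * θ) /
        (2 * (Real.exp θ * Real.cosh (φ₁ + φ₂) + Real.exp (-θ) * Real.cosh (φ₁ - φ₂)) ^ 2) ∧
    |(twoNodeIsingMatrix θ φ₁ φ₂).det| ≤ Real.tanh |θ| / 4 ∧
    |(twoNodeIsingMatrix θ 0 0).det| = Real.tanh |θ| / 4 ∧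
    (θ ≠ 0 →
      Real.exp (-(-Real.log |(twoNodeIsingMatrix θ 0 0).det|)) = Real.tanh |θ| / 4) := by
  refine ⟨twoNodeIsing_det_formula θ φ₁ φ₂, ?_, twoNodeIsing_det_zero θ, ?_⟩
  · set S := Real.exp θ * Real.cosh (φ₁ + φ₂) + Real.exp (-θ) * Real.cosh (φ₁ - φ₂) with hSdef
    have hS : 0 < S := by
      have := Real.cosh_pos (φ₁ + φ₂); have := Real.cosh_pos (φ₁ - φ₂); positivity
    have hSge : 2 * Real.cosh |θ| ≤ S := by
      have h1 := Real.one_le_cosh (φ₁ + φ₂)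
      have h2 := Real.one_le_cosh (φ₁ - φ₂)
      have e1 := Real.exp_pos θ
      have e2 := Real.exp_pos (-θ)
      rw [Real.cosh_abs, Real.cosh_eq]
      nlinarith
    have hs : 0 ≤ Real.sinh |θ| := Real.sinh_nonneg_iff.2 (abs_nonneg θ)
    have hc1 : 1 ≤ Real.cosh |θ| := Real.one_le_cosh _
    rw [twoNodeIsing_det_formula, abs_div, abs_of_pos (by positivity : (0:ℝ) < 2 * S ^ 2),
      twoNodeIsing_abs_sinh, abs_mul, abs_two, Real.sinh_two_mul,
      Real.tanh_eq_sinh_div_cosh, div_div]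
    rw [div_le_div_iff₀ (by positivity) (by positivity)]
    nlinarith [mul_nonneg hs (mul_nonneg (sub_nonneg.2 hSge)
      (by positivity : (0:ℝ) ≤ S + 2 * Real.cosh |θ|))]
  · intro hθ
    have h0 : 0 < Real.tanh |θ| := by
      rw [Real.tanh_eq_sinh_div_cosh]
      exact div_pos (Real.sinh_pos_iff.2 (abs_pos.2 hθ)) (Real.cosh_pos _)
    rw [neg_neg, Real.exp_log, twoNodeIsing_det_zero]
    rw [twoNodeIsing_det_zero]; positivity
end

section
/- Let P and Q be k×k real matrices each of whose columns has ℓ₁-norm at most 1 (Σ_i |P_{ij}| ≤ 1 and Σ_i |Q_{ij}| ≤ 1 for every j). Then |det P − det Q| ≤ Σ_{i,j} |P_{ij} − Q_{ij}|. In particular, for two probability mass functions on 𝒳 × 𝒳 viewed as |𝒳|×|𝒳| matrices, the difference of their determinants is bounded by their ℓ₁ (total-variation, up to a factor 2) distance. -/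
open scoped BigOperators


lemma abs_det_le_prod_col {n : Type*} [Fintype n] [DecidableEq n] (A : Matrix n n ℝ) :
    |A.det| ≤ ∏ j, ∑ i, |A i j| := by
  rw [Matrix.det_apply']
  calc |∑ σ : Equiv.Perm n, (Equiv.Perm.sign σ : ℤ) * ∏ i, A (σ i) i|
      ≤ ∑ σ : Equiv.Perm n, |(Equiv.Perm.sign σ : ℤ) * ∏ i, A (σ i) i| :=
        Finset.abs_sum_le_sum_abs _ _
    _ = ∑ σ : Equiv.Perm n, ∏ i, |A (σ i) i| := by
        refine Finset.sum_congr rfl fun σ _ => ?_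
        rw [abs_mul, Finset.abs_prod]
        rcases Int.units_eq_one_or (Equiv.Perm.sign σ) with h | h <;> simp [h]
    _ ≤ ∑ f : n → n, ∏ i, |A (f i) i| := by
        have h1 : (∑ σ : Equiv.Perm n, ∏ i, |A (σ i) i|)
            = ∑ f ∈ Finset.univ.image (fun σ : Equiv.Perm n => ⇑σ),
                ∏ i, |A (f i) i| :=
          (Finset.sum_image (g := fun σ : Equiv.Perm n => ⇑σ)
            (f := fun f : n → n => ∏ i, |A (f i) i|) (s := Finset.univ)
            (fun σ _ τ _ h => Equiv.coe_fn_injective h)).symm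
        rw [h1]
        exact Finset.sum_le_sum_of_subset_of_nonneg (Finset.subset_univ _)
          (fun f _ _ => Finset.prod_nonneg fun i _ => abs_nonneg _)
    _ = ∏ j, ∑ i, |A i j| := by
        rw [Finset.prod_univ_sum]
        simp [Fintype.piFinset_univ]

lemma det_sub_det_le {k : ℕ} (P Q : Matrix (Fin k) (Fin k) ℝ)
    (hP : ∀ j, ∑ i, |P i j| ≤ 1) (hQ : ∀ j, ∑ i, |Q i j| ≤ 1) :
    |P.det - Q.det| ≤ ∑ j, ∑ i, |P i j - Q i j| := by
  set F : ℕ → Matrix (Fin k) (Fin k) ℝ :=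
    fun m => Matrix.of fun i j => if (j : ℕ) < m then Q i j else P i j with hF
  have hF0 : F 0 = P := by ext i j; simp [hF]
  have hFk : F k = Q := by ext i j; simp [hF, j.isLt]
  have tele : P.det - Q.det = ∑ m ∈ Finset.range k, ((F m).det - (F (m + 1)).det) := by
    rw [Finset.sum_range_sub' (fun m => (F m).det), hF0, hFk]
  have step : ∀ j : Fin k, |(F j).det - (F ((j : ℕ) + 1)).det| ≤ ∑ i, |P i j - Q i j| := by
    intro j
    have e1 : (F (j : ℕ)).updateCol j (fun i => P i j) = F (j : ℕ) := by
      ext i l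
      rcases eq_or_ne l j with rfl | hl
      · simp [hF, Matrix.updateCol_apply]
      · simp [Matrix.updateCol_apply, hl]
    have e2 : (F (j : ℕ)).updateCol j (fun i => Q i j) = F ((j : ℕ) + 1) := by
      ext i l
      rcases eq_or_ne l j with rfl | hl
      · simp [hF, Matrix.updateCol_apply]
      · have hlj : (l : ℕ) ≠ (j : ℕ) := fun h => hl (Fin.ext h)
        have hiff : ((l : ℕ) < (j : ℕ) + 1) ↔ ((l : ℕ) < (j : ℕ)) := by omega
        simp [Matrix.updateCol_apply, hl, hF, hiff]
    have hup : (F (j : ℕ)).det - (F ((j : ℕ) + 1)).det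
        = ((F (j : ℕ)).updateCol j (fun i => P i j - Q i j)).det := by
      rw [show (fun i => P i j - Q i j)
            = (fun i => P i j) + (-1 : ℝ) • (fun i => Q i j) by
          funext i; simp [sub_eq_add_neg]]
      rw [Matrix.det_updateCol_add, Matrix.det_updateCol_smul, e1, e2]
      ring
    rw [hup]
    set D := (F (j : ℕ)).updateCol j (fun i => P i j - Q i j) with hD
    have hcol : ∀ l, l ≠ j → ∑ i, |D i l| ≤ 1 := by
      intro l hl
      have hDl : ∀ i, D i l = F (j : ℕ) i l := fun i => by
        simp [hD, Matrix.updateCol_apply, hl]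
      simp only [hDl]
      by_cases h : (l : ℕ) < (j : ℕ)
      · simpa [hF, h] using hQ l
      · simpa [hF, h] using hP l
    have hjcol : ∑ i, |D i j| = ∑ i, |P i j - Q i j| := by
      simp [hD]
    calc |D.det| ≤ ∏ l, ∑ i, |D i l| := abs_det_le_prod_col D
      _ = (∑ i, |D i j|) * ∏ l ∈ Finset.univ.erase j, ∑ i, |D i l| :=
          (Finset.mul_prod_erase _ _ (Finset.mem_univ j)).symm
      _ ≤ (∑ i, |P i j - Q i j|) * 1 := by
          rw [hjcol]
          refine mul_le_mul_of_nonneg_left ?_ (Finset.sum_nonneg fun i _ => abs_nonneg _)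
          exact Finset.prod_le_one (fun l _ => Finset.sum_nonneg fun i _ => abs_nonneg _)
            (fun l hl => hcol l (Finset.ne_of_mem_erase hl))
      _ = ∑ i, |P i j - Q i j| := mul_one _
  calc |P.det - Q.det|
      = |∑ m ∈ Finset.range k, ((F m).det - (F (m + 1)).det)| := by rw [tele]
    _ = |∑ j : Fin k, ((F (j : ℕ)).det - (F ((j : ℕ) + 1)).det)| := by
        rw [Fin.sum_univ_eq_sum_range (fun m => (F m).det - (F (m + 1)).det)]
    _ ≤ ∑ j : Fin k, |(F (j : ℕ)).det - (F ((j : ℕ) + 1)).det| :=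
        Finset.abs_sum_le_sum_abs _ _
    _ ≤ ∑ j, ∑ i, |P i j - Q i j| := Finset.sum_le_sum fun j _ => step j

/-- **Lipschitz continuity of the determinant for sub-stochastic matrices.**
If `P` and `Q` are `k × k` real matrices each of whose columns has `ℓ₁`-norm at most `1`,
then `|det P − det Q| ≤ Σ_{i,j} |P_{ij} − Q_{ij}|`.  In particular, for two probability
mass functions on `𝒳 × 𝒳` viewed as `|𝒳| × |𝒳|` matrices, the difference of their
determinants is bounded by their entrywise `ℓ₁` distance. -/
theorem abs_det_sub_det_le_l1 {k : ℕ}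
    (P Q : Matrix (Fin k) (Fin k) ℝ)
    (hP : ∀ j, ∑ i, |P i j| ≤ 1) (hQ : ∀ j, ∑ i, |Q i j| ≤ 1) :
    (|P.det - Q.det| ≤ ∑ i, ∑ j, |P i j - Q i j|) ∧
    (∀ (𝒳 : Type) [Fintype 𝒳] [DecidableEq 𝒳] (p q : 𝒳 × 𝒳 → ℝ),
      (∀ z, 0 ≤ p z) → (∀ z, 0 ≤ q z) → (∑ z, p z = 1) → (∑ z, q z = 1) →
      |(Matrix.of fun x y => p (x, y)).det - (Matrix.of fun x y => q (x, y)).det| ≤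
        ∑ x : 𝒳, ∑ y : 𝒳, |p (x, y) - q (x, y)|) := by
  constructor
  · exact (det_sub_det_le P Q hP hQ).trans_eq (Finset.sum_comm)
  · intro 𝒳 _ _ p q hp hq hsp hsq
    set e := Fintype.equivFin 𝒳 with he
    set A := (Matrix.of fun x y => p (x, y)) with hA
    set B := (Matrix.of fun x y => q (x, y)) with hB
    set P' := A.submatrix e.symm e.symm with hP'
    set Q' := B.submatrix e.symm e.symm with hQ'
    have key : ∀ (r : 𝒳 × 𝒳 → ℝ), (∀ z, 0 ≤ r z) → (∑ z, r z = 1) →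
        ∀ y : 𝒳, ∑ x : 𝒳, |r (x, y)| ≤ 1 := by
      intro r hr hsr y
      have h2 : ∀ x, |r (x, y)| = r (x, y) := fun x => abs_of_nonneg (hr _)
      simp only [h2]
      have h3 : ∑ y : 𝒳, ∑ x : 𝒳, r (x, y) = 1 := by
        rw [← hsr, Fintype.sum_prod_type]
        exact Finset.sum_comm
      calc ∑ x : 𝒳, r (x, y)
          ≤ ∑ y' : 𝒳, ∑ x : 𝒳, r (x, y') :=
            Finset.single_le_sum (f := fun y' : 𝒳 => ∑ x : 𝒳, r (x, y'))
              (fun y' _ => Finset.sum_nonneg fun x _ => hr _) (Finset.mem_univ y)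
        _ = 1 := h3
    have hPc : ∀ j, ∑ i, |P' i j| ≤ 1 := by
      intro j
      have h1 : ∑ i, |P' i j| = ∑ x : 𝒳, |p (x, e.symm j)| :=
        Fintype.sum_equiv e.symm _ _ (fun i => rfl)
      rw [h1]; exact key p hp hsp _
    have hQc : ∀ j, ∑ i, |Q' i j| ≤ 1 := by
      intro j
      have h1 : ∑ i, |Q' i j| = ∑ x : 𝒳, |q (x, e.symm j)| :=
        Fintype.sum_equiv e.symm _ _ (fun i => rfl)
      rw [h1]; exact key q hq hsq _
    have hdP : P'.det = A.det := Matrix.det_submatrix_equiv_self e.symm A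
    have hdQ : Q'.det = B.det := Matrix.det_submatrix_equiv_self e.symm B
    have main := det_sub_det_le P' Q' hPc hQc
    rw [hdP, hdQ] at main
    refine main.trans_eq ?_
    rw [Finset.sum_comm]
    refine Fintype.sum_equiv e.symm _ _ fun i => ?_
    exact Fintype.sum_equiv e.symm _ _ fun j => rfl
end
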